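/- arXiv:1604.01433 — 2 statements merged into one kernel-verified Lean document; each statement's English description precedes it below -/
import Mathlib

section
/- For p, q ∈ (0,1/2) and all r ∈ [0,1], 0 ≤ f(r) ≤ g(r), where g(r) = h₂(r ∗ q) − h₂(r) and f(r) = h₂(r ∗ q) − (1 − p∗q)·h₂(r ∗ (pq/(1−p∗q))) − (p∗q)·h₂(r ∗ (p(1−q)/(p∗q))). -/
/-- Binary convolution `a ∗ b = a(1-b) + b(1-a)`. -/
noncomputable def bconv (a b : ℝ) : ℝ := a * (1 - b) + b * (1 - a)

/-- Binary entropy (base 2), with the convention `0 · log 0 = 0`. -/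
noncomputable def h2 (x : ℝ) : ℝ := -x * Real.logb 2 x - (1 - x) * Real.logb 2 (1 - x)

/-- `g(r) = h₂(r ∗ q) − h₂(r)`. -/
noncomputable def gfun (q r : ℝ) : ℝ := h2 (bconv r q) - h2 r

/-- `f(r) = h₂(r∗q) − (1−p∗q) h₂(r ∗ pq/(1−p∗q)) − (p∗q) h₂(r ∗ p(1−q)/(p∗q))`. -/
noncomputable def ffun (p q r : ℝ) : ℝ :=
  h2 (bconv r q) - (1 - bconv p q) * h2 (bconv r (p * q / (1 - bconv p q)))
    - bconv p q * h2 (bconv r (p * (1 - q) / bconv p q))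

/-!
Write `v = p ∗ q`, `α = pq/(1-v)` and `β = p(1-q)/v`. Since `r ∗ ·` is affine and
`r ∗ (1 - β) = 1 - r ∗ β`, the identity `(1-v) α + v (1-β) = q` gives
`r ∗ q = (1-v) (r ∗ α) + v (1 - r ∗ β)`. Concavity and symmetry of `h₂` then yield `f ≥ 0`.
For `f ≤ g` it suffices that `h₂ r ≤ h₂ (r ∗ s)` for every `s`, which is concavity again:
`r ∗ s` is a convex combination of `r` and `1 - r`.
-/

open Set

lemma h2_eq_inv_log_two_mul_binEntropy (x : ℝ) : h2 x = (Real.log 2)⁻¹ * Real.binEntropy x := by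
  simp only [h2, Real.binEntropy, Real.logb, Real.log_inv]
  ring

lemma h2_one_sub (x : ℝ) : h2 (1 - x) = h2 x := by
  simp only [h2, sub_sub_cancel]
  ring

lemma concaveOn_h2 : ConcaveOn ℝ (Icc 0 1) h2 := by
  have h := Real.strictConcave_binEntropy.concaveOn.smul (c := (Real.log 2)⁻¹) (by positivity)
  have h2_eq : h2 = fun x => (Real.log 2)⁻¹ • Real.binEntropy x :=
    funext h2_eq_inv_log_two_mul_binEntropy
  rwa [h2_eq]

lemma bconv_mem_Icc {a b : ℝ} (ha : a ∈ Icc (0 : ℝ) 1) (hb : b ∈ Icc (0 : ℝ) 1) :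
    bconv a b ∈ Icc (0 : ℝ) 1 := by
  obtain ⟨ha0, ha1⟩ := ha
  obtain ⟨hb0, hb1⟩ := hb
  constructor <;> unfold bconv <;> nlinarith

lemma bconv_one_sub (a b : ℝ) : bconv a (1 - b) = 1 - bconv a b := by
  unfold bconv
  ring

lemma bconv_convexComb {w₁ w₂ : ℝ} (hw : w₁ + w₂ = 1) (r x y : ℝ) :
    bconv r (w₁ * x + w₂ * y) = w₁ * bconv r x + w₂ * bconv r y := by
  rw [← sub_eq_of_eq_add' hw.symm]
  unfold bconv
  ring

lemma h2_le_h2_bconv {a b : ℝ} (ha : a ∈ Icc (0 : ℝ) 1) (hb : b ∈ Icc (0 : ℝ) 1) :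
    h2 a ≤ h2 (bconv a b) := by
  have h1a : 1 - a ∈ Icc (0 : ℝ) 1 := ⟨by linarith [ha.2], by linarith [ha.1]⟩
  have hconc := concaveOn_h2.2 ha h1a (by linarith [hb.2]) hb.1 (sub_add_cancel 1 b)
  simp only [smul_eq_mul, h2_one_sub] at hconc
  calc h2 a = (1 - b) * h2 a + b * h2 a := by ring
    _ ≤ h2 ((1 - b) * a + b * (1 - a)) := hconc
    _ = h2 (bconv a b) := by unfold bconv; ring_nf

section Mixture

variable {w r x y : ℝ} (hw : w ∈ Icc (0 : ℝ) 1) (hr : r ∈ Icc (0 : ℝ) 1)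
  (hx : x ∈ Icc (0 : ℝ) 1) (hy : y ∈ Icc (0 : ℝ) 1)
include hw hr hx hy

lemma h2_le_mix_h2_bconv : h2 r ≤ (1 - w) * h2 (bconv r x) + w * h2 (bconv r y) := by
  nlinarith [h2_le_h2_bconv hr hx, h2_le_h2_bconv hr hy, hw.1, hw.2]

lemma mix_h2_bconv_le : (1 - w) * h2 (bconv r x) + w * h2 (bconv r y)
    ≤ h2 (bconv r ((1 - w) * x + w * (1 - y))) := by
  have hrx := bconv_mem_Icc hr hx
  have hry : 1 - bconv r y ∈ Icc (0 : ℝ) 1 := by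
    rw [← bconv_one_sub]
    exact bconv_mem_Icc hr ⟨by linarith [hy.2], by linarith [hy.1]⟩
  have hconc := concaveOn_h2.2 hrx hry (by linarith [hw.2]) hw.1 (sub_add_cancel 1 w)
  simp only [smul_eq_mul] at hconc
  rwa [h2_one_sub, ← bconv_one_sub, ← bconv_convexComb (sub_add_cancel 1 w)] at hconc

end Mixture

section Posterior

variable {p q : ℝ} (hp : p ∈ Ioo (0 : ℝ) 1) (hq : q ∈ Ioo (0 : ℝ) 1)
include hp hq

lemma bconv_mem_Ioo : bconv p q ∈ Ioo (0 : ℝ) 1 := by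
  obtain ⟨hp0, hp1⟩ := hp
  obtain ⟨hq0, hq1⟩ := hq
  constructor <;> unfold bconv <;> nlinarith [mul_pos hp0 hq0, mul_pos (sub_pos.2 hp1) (sub_pos.2 hq1)]

lemma div_one_sub_bconv_mem_Icc : p * q / (1 - bconv p q) ∈ Icc (0 : ℝ) 1 := by
  have hv := bconv_mem_Ioo hp hq
  have hv1 : 0 < 1 - bconv p q := sub_pos.2 hv.2
  refine ⟨div_nonneg (mul_pos hp.1 hq.1).le hv1.le, (div_le_one hv1).2 ?_⟩
  unfold bconv
  nlinarith [mul_pos (sub_pos.2 hp.2) (sub_pos.2 hq.2)]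

lemma div_bconv_mem_Icc : p * (1 - q) / bconv p q ∈ Icc (0 : ℝ) 1 := by
  have hv := bconv_mem_Ioo hp hq
  refine ⟨div_nonneg (mul_pos hp.1 (sub_pos.2 hq.2)).le hv.1.le, (div_le_one hv.1).2 ?_⟩
  unfold bconv
  nlinarith [mul_pos hq.1 (sub_pos.2 hp.2)]

lemma posterior_mix_eq :
    (1 - bconv p q) * (p * q / (1 - bconv p q))
      + bconv p q * (1 - p * (1 - q) / bconv p q) = q := by
  have hv := bconv_mem_Ioo hp hq
  have hv1 : 1 - bconv p q ≠ 0 := (sub_pos.2 hv.2).ne'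
  rw [mul_div_cancel₀ _ hv1, mul_one_sub, mul_div_cancel₀ _ hv.1.ne']
  unfold bconv
  ring

end Posterior

theorem stmt3 (p q : ℝ) (hp : p ∈ Set.Ioo (0:ℝ) (1/2)) (hq : q ∈ Set.Ioo (0:ℝ) (1/2))
    (r : ℝ) (hr : r ∈ Set.Icc (0:ℝ) 1) :
    0 ≤ ffun p q r ∧ ffun p q r ≤ gfun q r := by
  have hp' : p ∈ Ioo (0 : ℝ) 1 := ⟨hp.1, by linarith [hp.2]⟩
  have hq' : q ∈ Ioo (0 : ℝ) 1 := ⟨hq.1, by linarith [hq.2]⟩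
  have hv := bconv_mem_Ioo hp' hq'
  have hw : bconv p q ∈ Icc (0 : ℝ) 1 := Ioo_subset_Icc_self hv
  have hα := div_one_sub_bconv_mem_Icc hp' hq'
  have hβ := div_bconv_mem_Icc hp' hq'
  have hlower := mix_h2_bconv_le hw hr hα hβ
  rw [posterior_mix_eq hp' hq'] at hlower
  have hupper := h2_le_mix_h2_bconv hw hr hα hβ
  unfold ffun gfun
  constructor <;> linarith
end

section
/- For p, q ∈ (0,1/2), the function ν(r) = f(r) − g(r) is strictly concave on [0, 1/2], where f and g are the binary relevance-rate functions. -/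
/-!
Since `h₂(r ∗ q)` cancels, `f − g` equals `−((1 − μ) g_a + μ g_b)` with `μ = p ∗ q`,
`a = pq/(1 − μ)` and `b = p(1 − q)/μ`, where `g_c(r) = h₂(r ∗ c) − h₂(r)`; for `p, q ∈ (0, 1)` both
`a` and `b` lie in `(0, 1)`. Each `g_c` with `c ∈ (0, 1)` is strictly convex: as `r ↦ r ∗ c` is affine
with slope `1 − 2c`, `g_c''(r) ln 2 = 1/(r(1 − r)) − (1 − 2c)²/(s(1 − s))` with `s = r ∗ c`, and
`s(1 − s) = (1 − 2c)² r(1 − r) + c(1 − c) > (1 − 2c)² r(1 − r)`.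
-/

open Real Set

theorem StrictConvexOn.const_mul {E : Type*} [AddCommMonoid E] [Module ℝ E] {s : Set E}
    {f : E → ℝ} {c : ℝ} (hc : 0 < c) (hf : StrictConvexOn ℝ s f) :
    StrictConvexOn ℝ s fun x => c * f x := by
  refine ⟨hf.1, fun x hx y hy hxy a b ha hb hab => ?_⟩
  have h := mul_lt_mul_of_pos_left (hf.2 hx hy hxy ha hb hab) hc
  simp only [smul_eq_mul] at h ⊢
  linarith

lemma bconv_mem_Ioo_s4 {x a : ℝ} (hx : x ∈ Ioo (0:ℝ) 1) (ha : a ∈ Ioo (0:ℝ) 1) :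
    bconv x a ∈ Ioo (0:ℝ) 1 := by
  obtain ⟨hx0, hx1⟩ := hx
  obtain ⟨ha0, ha1⟩ := ha
  constructor <;> unfold bconv <;> nlinarith

lemma bconv_mul_one_sub_bconv (x a : ℝ) :
    bconv x a * (1 - bconv x a) = (1 - 2 * a) ^ 2 * (x * (1 - x)) + a * (1 - a) := by
  unfold bconv; ring

lemma hasDerivAt_bconv_left (a x : ℝ) : HasDerivAt (fun r => bconv r a) (1 - 2 * a) x := by
  have h : (fun r => bconv r a) = fun r => (1 - 2 * a) * r + a := by
    funext r; unfold bconv; ring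
  rw [h]
  simpa using ((hasDerivAt_id x).const_mul (1 - 2 * a)).add_const a

lemma hasDerivAt_deriv_binEntropy {p : ℝ} (hp : p ∈ Ioo (0:ℝ) 1) :
    HasDerivAt (deriv binEntropy) (-1 / (p * (1 - p))) p := by
  have hd : DifferentiableAt ℝ (deriv binEntropy) p := by
    rw [funext deriv_binEntropy]
    have : 1 - p ≠ 0 := by linarith [hp.2]
    fun_prop (disch := first | assumption | exact hp.1.ne')
  have h2 : deriv (deriv binEntropy) p = -1 / (p * (1 - p)) := deriv2_binEntropy
  exact h2 ▸ hd.hasDerivAt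

lemma deriv2_binEntropy_bconv_sub_binEntropy {a x : ℝ} (ha : a ∈ Ioo (0:ℝ) 1)
    (hx : x ∈ Ioo (0:ℝ) 1) :
    deriv^[2] (fun r => binEntropy (bconv r a) - binEntropy r) x
      = 1 / (x * (1 - x)) - (1 - 2 * a) ^ 2 / (bconv x a * (1 - bconv x a)) := by
  have hderiv : deriv (fun r => binEntropy (bconv r a) - binEntropy r)
      =ᶠ[nhds x] fun y => (1 - 2 * a) * deriv binEntropy (bconv y a) - deriv binEntropy y := by
    filter_upwards [isOpen_Ioo.mem_nhds hx] with y hy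
    have hs := bconv_mem_Ioo_s4 hy ha
    have hc : HasDerivAt (fun r => binEntropy (bconv r a))
        (deriv binEntropy (bconv y a) * (1 - 2 * a)) y := by
      have h := (differentiableAt_binEntropy hs.1.ne' hs.2.ne).hasDerivAt
      exact h.comp y (hasDerivAt_bconv_left a y)
    have h : HasDerivAt (fun r => binEntropy (bconv r a) - binEntropy r)
        (deriv binEntropy (bconv y a) * (1 - 2 * a) - deriv binEntropy y) y :=
      hc.sub (differentiableAt_binEntropy hy.1.ne' hy.2.ne).hasDerivAt
    rw [h.deriv, mul_comm]
  have hderiv2 : HasDerivAt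
      (fun y => (1 - 2 * a) * deriv binEntropy (bconv y a) - deriv binEntropy y)
      ((1 - 2 * a) * (-1 / (bconv x a * (1 - bconv x a)) * (1 - 2 * a)) - -1 / (x * (1 - x))) x :=
    (((hasDerivAt_deriv_binEntropy (bconv_mem_Ioo_s4 hx ha)).comp x
      (hasDerivAt_bconv_left a x)).const_mul (1 - 2 * a)).sub (hasDerivAt_deriv_binEntropy hx)
  show deriv (deriv _) x = _
  rw [hderiv.deriv_eq, hderiv2.deriv]
  ring

lemma strictConvexOn_binEntropy_bconv_sub_binEntropy {a : ℝ} (ha : a ∈ Ioo (0:ℝ) 1) :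
    StrictConvexOn ℝ (Icc 0 1) fun r => binEntropy (bconv r a) - binEntropy r := by
  refine strictConvexOn_of_deriv2_pos (convex_Icc 0 1) (by unfold bconv; fun_prop) ?_
  rw [interior_Icc]
  intro x hx
  rw [deriv2_binEntropy_bconv_sub_binEntropy ha hx, sub_pos]
  have hs := bconv_mem_Ioo_s4 hx ha
  have hS : 0 < bconv x a * (1 - bconv x a) := mul_pos hs.1 (by linarith [hs.2])
  have hX : 0 < x * (1 - x) := mul_pos hx.1 (by linarith [hx.2])
  have hA : 0 < a * (1 - a) := mul_pos ha.1 (by linarith [ha.2])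
  rw [div_lt_div_iff₀ hS hX, bconv_mul_one_sub_bconv]
  nlinarith

lemma h2_eq_binEntropy_div_log_two (x : ℝ) : h2 x = binEntropy x / log 2 := by
  unfold h2 binEntropy logb
  rw [log_inv, log_inv]
  ring

lemma strictConvexOn_gfun {a : ℝ} (ha : a ∈ Ioo (0:ℝ) 1) : StrictConvexOn ℝ (Icc 0 1) (gfun a) := by
  have h : gfun a = fun r => (log 2)⁻¹ * (binEntropy (bconv r a) - binEntropy r) := by
    funext r
    simp only [gfun, h2_eq_binEntropy_div_log_two]
    ring
  rw [h]
  exact (strictConvexOn_binEntropy_bconv_sub_binEntropy ha).const_mul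
    (inv_pos.2 (log_pos one_lt_two))

lemma ffun_sub_gfun_eq (p q r : ℝ) :
    ffun p q r - gfun q r = -((1 - bconv p q) * gfun (p * q / (1 - bconv p q)) r
      + bconv p q * gfun (p * (1 - q) / bconv p q) r) := by
  unfold ffun gfun
  ring

lemma strictConcaveOn_ffun_sub_gfun {p q : ℝ} (hp : p ∈ Ioo (0:ℝ) 1) (hq : q ∈ Ioo (0:ℝ) 1) :
    StrictConcaveOn ℝ (Icc 0 1) fun r => ffun p q r - gfun q r := by
  have hμ := bconv_mem_Ioo_s4 hp hq
  obtain ⟨hp0, hp1⟩ := hp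
  obtain ⟨hq0, hq1⟩ := hq
  have ha : p * q / (1 - bconv p q) ∈ Ioo (0:ℝ) 1 := by
    refine ⟨div_pos (by positivity) (by linarith [hμ.2]), (div_lt_one (by linarith [hμ.2])).2 ?_⟩
    unfold bconv; nlinarith
  have hb : p * (1 - q) / bconv p q ∈ Ioo (0:ℝ) 1 := by
    refine ⟨div_pos (by nlinarith) hμ.1, (div_lt_one hμ.1).2 ?_⟩
    unfold bconv; nlinarith
  simp only [ffun_sub_gfun_eq]
  exact (((strictConvexOn_gfun ha).const_mul (by linarith [hμ.2])).add
    ((strictConvexOn_gfun hb).const_mul hμ.1)).neg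

theorem stmt4 (p q : ℝ) (hp : p ∈ Set.Ioo (0:ℝ) (1/2)) (hq : q ∈ Set.Ioo (0:ℝ) (1/2)) :
    StrictConcaveOn ℝ (Set.Icc (0:ℝ) (1/2)) (fun r => ffun p q r - gfun q r) := by
  have hp' : p ∈ Ioo (0:ℝ) 1 := ⟨hp.1, by linarith [hp.2]⟩
  have hq' : q ∈ Ioo (0:ℝ) 1 := ⟨hq.1, by linarith [hq.2]⟩
  exact (strictConcaveOn_ffun_sub_gfun hp' hq').subset (Icc_subset_Icc_right (by norm_num))
    (convex_Icc 0 (1/2))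
end
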